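/- Assume m₁ = 1 and m₂ = 0 (so that ρ = 1/2). Then for every λ ∈ ℂ with Im λ > 0 and every t > 0, b_λ(t) = 2^{−2ρ−1} ∫₀^1 s^{(m₁+2)/4 − iλ/2 − 1} (1−s)^{(−m₁+2)/4 − iλ/2 − 1} (cosh²t − s)^{−(ρ−iλ)/2} ds, the integral being absolutely convergent. -/

import Mathlib

/-! Expanding `(1 - s x)^(-a) = ∑ (a)ₙ/n! (s x)ⁿ` and integrating term by term against the beta
kernel `s^(b-1) (1-s)^(b'-1)` gives Euler's integral
`∫₀¹ s^(b-1) (1-s)^(b'-1) (1-sx)^(-a) ds = B(b,b') ₂F₁(a,b;b+b';x)`,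
because `B(b+n,b') = B(b,b') (b)ₙ/(b+b')ₙ`; the interchange is justified by
`∑ |(a)ₙ/n!| |x|ⁿ < ∞` for `|x| < 1`.
For `m₁ = 1, m₂ = 0` the integrand of the theorem is `(cosh² t)^(-a)` times Euler's integrand with
`a = 1/4 - iλ/2`, `b = 3/4 - iλ/2`, `b' = a`, `x = cosh⁻² t`; since `b + a = 1 - iλ`, the Gamma
quotient in `b_λ` is exactly `B(b,a)`, and the powers of `2` and `cosh t` match. -/


open Complex MeasureTheory Set

noncomputable section

/-- Gauss hypergeometric function ₂F₁ as a power series sum. -/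
def hyp (a b c x : ℂ) : ℂ :=
  ∑' n : ℕ, (ascPochhammer ℂ n).eval a * (ascPochhammer ℂ n).eval b /
    ((ascPochhammer ℂ n).eval c * (n.factorial : ℂ)) * x ^ n

/-- ρ = (m₁ + 2 m₂)/2 -/
def rho (m₁ m₂ : ℕ) : ℝ := ((m₁ : ℝ) + 2 * m₂) / 2

/-- Δ(t) = (2 sinh t)^(m₁+m₂) (2 cosh t)^(m₂) -/
def Del (m₁ m₂ : ℕ) (t : ℝ) : ℝ :=
  (2 * Real.sinh t) ^ (m₁ + m₂) * (2 * Real.cosh t) ^ m₂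

/-- The solution Φ_λ. -/
def Phi (m₁ m₂ : ℕ) (l : ℂ) (t : ℝ) : ℂ :=
  ((2 * Real.cosh t : ℝ) : ℂ) ^ (Complex.I * l - (rho m₁ m₂ : ℂ)) *
    hyp (((rho m₁ m₂ : ℂ) - Complex.I * l) / 2) (((m₁ : ℂ) + 2) / 4 - Complex.I * l / 2)
      (1 - Complex.I * l) ((((Real.cosh t) ^ 2 : ℝ) : ℂ))⁻¹

/-- The function b_λ. -/
def bfun (m₁ m₂ : ℕ) (l : ℂ) (t : ℝ) : ℂ :=
  (2 : ℂ) ^ (-(rho m₁ m₂ : ℂ) - 1 - Complex.I * l) *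
    (Complex.Gamma (((rho m₁ m₂ : ℂ) - Complex.I * l) / 2) *
      Complex.Gamma (((m₁ : ℂ) + 2) / 4 - Complex.I * l / 2) /
      (Complex.Gamma (((m₁ : ℂ) + (m₂ : ℂ) + 1) / 2) * Complex.Gamma (1 - Complex.I * l))) *
    Phi m₁ m₂ l t

lemma ring_choose_add_nat_sub_one (a : ℂ) (n : ℕ) :
    Ring.choose (a + n - 1) n = (ascPochhammer ℂ n).eval a / (n.factorial : ℂ) := by
  rw [Ring.choose_eq_smul, Polynomial.descPochhammer_smeval_eq_ascPochhammer,
    Polynomial.ascPochhammer_smeval_eq_eval, smul_eq_mul, inv_mul_eq_div]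
  ring_nf

theorem hasFPowerSeriesOnBall_one_sub_cpow_neg (a : ℂ) :
    HasFPowerSeriesOnBall (fun z ↦ (1 - z) ^ (-a))
      (.ofScalars ℂ fun n ↦ (ascPochhammer ℂ n).eval a / (n.factorial : ℂ)) 0 1 := by
  simpa only [ring_choose_add_nat_sub_one, one_div, ← cpow_neg] using
    one_div_one_sub_cpow_hasFPowerSeriesOnBall_zero a

theorem hasSum_ascPochhammer_mul_pow (a : ℂ) {z : ℂ} (hz : ‖z‖ < 1) :
    HasSum (fun n ↦ (ascPochhammer ℂ n).eval a / (n.factorial : ℂ) * z ^ n) ((1 - z) ^ (-a)) := by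
  have := (hasFPowerSeriesOnBall_one_sub_cpow_neg a).hasSum (y := z)
    (by simpa [enorm_eq_nnnorm, ← NNReal.coe_lt_one] using hz)
  simpa [FormalMultilinearSeries.ofScalars_apply_eq, mul_comm] using this

theorem summable_norm_ascPochhammer_mul_pow (a : ℂ) {r : ℝ} (hr₀ : 0 ≤ r) (hr : r < 1) :
    Summable (fun n ↦ ‖(ascPochhammer ℂ n).eval a / (n.factorial : ℂ)‖ * r ^ n) := by
  have hradius := (hasFPowerSeriesOnBall_one_sub_cpow_neg a).r_le
  lift r to NNReal using hr₀
  simpa [FormalMultilinearSeries.ofScalars_norm] using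
    FormalMultilinearSeries.summable_norm_mul_pow _ ((ENNReal.coe_lt_one_iff.2 hr).trans_le hradius)

namespace Complex

theorem Gamma_add_nat {z : ℂ} (hz : 0 < z.re) (n : ℕ) :
    Gamma (z + n) = Gamma z * (ascPochhammer ℂ n).eval z := by
  rw [← Gamma_add_nat_div_Gamma_eq z, mul_div_cancel₀ _ (Gamma_ne_zero_of_re_pos hz)]
  rintro k rfl
  simp only [neg_re, natCast_re, Left.neg_pos_iff] at hz
  exact hz.not_ge k.cast_nonneg

theorem betaIntegral_add_nat {u v : ℂ} (hu : 0 < u.re) (hv : 0 < v.re) (n : ℕ) :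
    betaIntegral (u + n) v =
      betaIntegral u v * (ascPochhammer ℂ n).eval u / (ascPochhammer ℂ n).eval (u + v) := by
  have hun : 0 < (u + n).re := by simp only [add_re, natCast_re]; positivity
  have huv : 0 < (u + v).re := by simp only [add_re]; linarith
  have hpoch : (ascPochhammer ℂ n).eval (u + v) ≠ 0 := by
    intro h
    have := Gamma_add_nat huv n
    rw [h, mul_zero] at this
    exact Gamma_ne_zero_of_re_pos (by simp only [add_re, natCast_re]; positivity) this
  have huv' : Gamma (u + v) ≠ 0 := Gamma_ne_zero_of_re_pos huv
  have hn := Gamma_mul_Gamma_eq_betaIntegral hun hv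
  have h0 := Gamma_mul_Gamma_eq_betaIntegral hu hv
  rw [add_right_comm, Gamma_add_nat hu, Gamma_add_nat huv] at hn
  rw [eq_div_iff hpoch]
  refine mul_left_cancel₀ huv' ?_
  linear_combination (ascPochhammer ℂ n).eval u * h0 - hn

theorem ofReal_sub_cpow_eq_mul {p s : ℝ} (hp : 0 < p) (hs : s ≤ p) (w : ℂ) :
    ((p - s : ℝ) : ℂ) ^ w = (p : ℂ) ^ w * (1 - s * (p : ℂ)⁻¹) ^ w := by
  have hps : p - s = p * (1 - s * p⁻¹) := by field_simp
  have hnonneg : 0 ≤ 1 - s * p⁻¹ := by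
    rw [sub_nonneg, ← div_eq_mul_inv]; exact div_le_one_of_le₀ hs hp.le
  rw [hps, ofReal_mul, mul_cpow_ofReal_nonneg hp.le hnonneg]
  push_cast
  rfl

theorem ofReal_sq_cpow {p : ℝ} (hp : 0 < p) (w : ℂ) :
    ((p ^ 2 : ℝ) : ℂ) ^ w = (p : ℂ) ^ (2 * w) := by
  rw [sq, ofReal_mul, mul_cpow_ofReal_nonneg hp.le hp.le, ← cpow_add _ _ (ofReal_ne_zero.2 hp.ne'),
    two_mul]

end Complex

def betaKernel (u v : ℂ) (s : ℝ) : ℂ := (s : ℂ) ^ (u - 1) * (1 - (s : ℂ)) ^ (v - 1)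

theorem integrableOn_betaKernel {u v : ℂ} (hu : 0 < u.re) (hv : 0 < v.re) :
    IntegrableOn (betaKernel u v) (Ioo 0 1) :=
  ((intervalIntegrable_iff_integrableOn_Ioc_of_le zero_le_one).1
    (betaIntegral_convergent hu hv)).mono_set Ioo_subset_Ioc_self

theorem setIntegral_betaKernel (u v : ℂ) :
    ∫ s in Ioo (0 : ℝ) 1, betaKernel u v s = betaIntegral u v := by
  rw [betaIntegral, intervalIntegral.integral_of_le zero_le_one, integral_Ioc_eq_integral_Ioo]
  rfl

theorem betaKernel_add_nat (u v : ℂ) (n : ℕ) {s : ℝ} (hs : 0 < s) :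
    betaKernel (u + n) v s = (s : ℂ) ^ n * betaKernel u v s := by
  rw [betaKernel, betaKernel, add_sub_right_comm, cpow_add _ _ (ofReal_ne_zero.2 hs.ne'),
    cpow_natCast]
  ring

theorem norm_betaKernel_add_nat_le (u v : ℂ) (n : ℕ) {s : ℝ} (hs : s ∈ Ioo 0 1) :
    ‖betaKernel (u + n) v s‖ ≤ ‖betaKernel u v s‖ := by
  rw [betaKernel_add_nat u v n hs.1, norm_mul]
  refine mul_le_of_le_one_left (norm_nonneg _) ?_
  rw [norm_pow, norm_real, Real.norm_of_nonneg hs.1.le]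
  exact pow_le_one₀ hs.1.le hs.2.le

section Euler

variable (a : ℂ) {b b' x : ℂ}

theorem norm_ofReal_mul_lt_one (hx : ‖x‖ < 1) {s : ℝ} (hs : s ∈ Icc 0 1) : ‖(s : ℂ) * x‖ < 1 := by
  rw [norm_mul, norm_real, Real.norm_of_nonneg hs.1]
  exact lt_of_le_of_lt (mul_le_of_le_one_left (norm_nonneg x) hs.2) hx

theorem continuousOn_one_sub_mul_cpow (hx : ‖x‖ < 1) :
    ContinuousOn (fun s : ℝ ↦ (1 - s * x) ^ (-a)) (Icc 0 1) := by
  refine ContinuousOn.cpow_const (by fun_prop) fun s hs ↦ ?_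
  rw [sub_eq_add_neg]
  exact mem_slitPlane_of_norm_lt_one (by simpa using norm_ofReal_mul_lt_one hx hs)

theorem integrableOn_betaKernel_mul_one_sub_mul_cpow (hb : 0 < b.re) (hb' : 0 < b'.re)
    (hx : ‖x‖ < 1) :
    IntegrableOn (fun s : ℝ ↦ betaKernel b b' s * (1 - s * x) ^ (-a)) (Ioo 0 1) :=
  (integrableOn_betaKernel hb hb').mul_continuousOn_of_subset (continuousOn_one_sub_mul_cpow a hx)
    measurableSet_Ioo isCompact_Icc Ioo_subset_Icc_self

theorem hasSum_betaKernel_add_nat (hx : ‖x‖ < 1) {s : ℝ} (hs : s ∈ Ioo 0 1) :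
    HasSum
      (fun n : ℕ ↦ (ascPochhammer ℂ n).eval a / (n.factorial : ℂ) * x ^ n * betaKernel (b + n) b' s)
      (betaKernel b b' s * (1 - s * x) ^ (-a)) := by
  have h := (hasSum_ascPochhammer_mul_pow a (norm_ofReal_mul_lt_one hx (Ioo_subset_Icc_self hs)))
  refine (h.mul_left (betaKernel b b' s)).congr_fun fun n ↦ ?_
  rw [betaKernel_add_nat b b' n hs.1]
  ring

theorem setIntegral_betaKernel_mul_one_sub_mul_cpow (hb : 0 < b.re) (hb' : 0 < b'.re)
    (hx : ‖x‖ < 1) :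
    ∫ s in Ioo (0 : ℝ) 1, betaKernel b b' s * (1 - s * x) ^ (-a) =
      betaIntegral b b' * hyp a b (b + b') x := by
  set c : ℕ → ℂ := fun n ↦ (ascPochhammer ℂ n).eval a / (n.factorial : ℂ)
  set F : ℕ → ℝ → ℂ := fun n s ↦ c n * x ^ n * betaKernel (b + n) b' s
  have hbn (n : ℕ) : 0 < (b + n).re := by simp only [add_re, natCast_re]; positivity
  have hF_int (n : ℕ) : IntegrableOn (F n) (Ioo 0 1) :=
    (integrableOn_betaKernel (hbn n) hb').const_mul _
  have hF_norm (n : ℕ) : ∫ s in Ioo (0 : ℝ) 1, ‖F n s‖ ≤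
      (‖c n‖ * ‖x‖ ^ n) * ∫ s in Ioo (0 : ℝ) 1, ‖betaKernel b b' s‖ := by
    simp only [F, norm_mul, norm_pow, integral_const_mul]
    refine mul_le_mul_of_nonneg_left ?_ (by positivity)
    exact setIntegral_mono_on (integrableOn_betaKernel (hbn n) hb').norm
      (integrableOn_betaKernel hb hb').norm measurableSet_Ioo
      fun s hs ↦ norm_betaKernel_add_nat_le b b' n hs
  have hF_sum : Summable fun n ↦ ∫ s in Ioo (0 : ℝ) 1, ‖F n s‖ :=
    Summable.of_nonneg_of_le (fun n ↦ integral_nonneg fun _ ↦ norm_nonneg _) hF_norm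
      ((summable_norm_ascPochhammer_mul_pow a (norm_nonneg x) hx).mul_right _)
  have hsum := hasSum_integral_of_summable_integral_norm hF_int hF_sum
  rw [setIntegral_congr_fun measurableSet_Ioo
    fun s hs ↦ (hasSum_betaKernel_add_nat a hx hs).tsum_eq] at hsum
  rw [← hsum.tsum_eq, hyp, ← tsum_mul_left]
  refine tsum_congr fun n ↦ ?_
  rw [integral_const_mul, setIntegral_betaKernel, betaIntegral_add_nat hb hb' n]
  ring

end Euler

theorem bfun_one_zero {l : ℂ} (hl : 0 < l.im) (t : ℝ) :
    bfun 1 0 l t = 2 ^ (-2 : ℂ) * ((Real.cosh t ^ 2 : ℝ) : ℂ) ^ (-(1 / 4 - I * l / 2)) *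
      (betaIntegral (3 / 4 - I * l / 2) (1 / 4 - I * l / 2) *
        hyp (1 / 4 - I * l / 2) (3 / 4 - I * l / 2) (1 - I * l) ((Real.cosh t ^ 2 : ℝ) : ℂ)⁻¹) := by
  set a : ℂ := 1 / 4 - I * l / 2
  set b : ℂ := 3 / 4 - I * l / 2
  have ha : 0 < a.re := by simp [a]; linarith
  have hb : 0 < b.re := by simp [b]; linarith
  have hcosh := Real.cosh_pos t
  have hbeta : betaIntegral b a = Gamma b * Gamma a / Gamma (1 - I * l) := by
    rw [eq_div_iff (Gamma_ne_zero_of_re_pos (by simp; linarith)),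
      show 1 - I * l = b + a by ring, Gamma_mul_Gamma_eq_betaIntegral hb ha]
    ring
  have hpow : (((2 * Real.cosh t : ℝ) : ℂ)) ^ (I * l - 1 / 2) =
      2 ^ (I * l - 1 / 2) * ((Real.cosh t ^ 2 : ℝ) : ℂ) ^ (-a) := by
    rw [ofReal_sq_cpow hcosh, ofReal_mul, mul_cpow_ofReal_nonneg zero_le_two hcosh.le]
    congr 2
    simp only [a]
    ring
  have hrho : (rho 1 0 : ℂ) = 1 / 2 := by norm_num [rho]
  simp only [bfun, Phi, hrho, Nat.cast_one, Nat.cast_zero, hbeta]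
  have h2 : (2 : ℂ) ^ (-(1 / 2) - 1 - I * l) * 2 ^ (I * l - 1 / 2) = 2 ^ (-2 : ℂ) := by
    rw [← cpow_add _ _ two_ne_zero]
    ring_nf
  rw [show ((1 : ℂ) / 2 - I * l) / 2 = a by simp only [a]; ring,
    show ((1 : ℂ) + 2) / 4 - I * l / 2 = b by simp only [b]; ring,
    show ((1 : ℂ) + 0 + 1) / 2 = 1 by norm_num, Gamma_one, hpow, ← h2]
  ring

theorem stmt16 (l : ℂ) (hl : 0 < l.im) (t : ℝ) (ht : 0 < t) :
    IntegrableOn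
      (fun s : ℝ =>
        (s : ℂ) ^ (((1 : ℂ) + 2) / 4 - Complex.I * l / 2 - 1) *
          ((1 - s : ℝ) : ℂ) ^ (((-1 : ℂ) + 2) / 4 - Complex.I * l / 2 - 1) *
          (((Real.cosh t) ^ 2 - s : ℝ) : ℂ) ^ (-(((rho 1 0 : ℂ) - Complex.I * l) / 2)))
      (Set.Ioo 0 1) ∧
    bfun 1 0 l t =
      (2 : ℂ) ^ (-2 * (rho 1 0 : ℂ) - 1) *
        ∫ s in Set.Ioo (0 : ℝ) 1,
          (s : ℂ) ^ (((1 : ℂ) + 2) / 4 - Complex.I * l / 2 - 1) *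
            ((1 - s : ℝ) : ℂ) ^ (((-1 : ℂ) + 2) / 4 - Complex.I * l / 2 - 1) *
            (((Real.cosh t) ^ 2 - s : ℝ) : ℂ) ^ (-(((rho 1 0 : ℂ) - Complex.I * l) / 2)) := by
  set a : ℂ := 1 / 4 - I * l / 2
  set b : ℂ := 3 / 4 - I * l / 2
  set p : ℝ := Real.cosh t ^ 2
  have ha : 0 < a.re := by simp [a]; linarith
  have hb : 0 < b.re := by simp [b]; linarith
  have hp : 1 < p := one_lt_pow₀ (Real.one_lt_cosh.2 ht.ne') two_ne_zero
  have hx : ‖(p : ℂ)⁻¹‖ < 1 := by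
    rw [norm_inv, norm_real, Real.norm_of_nonneg (by linarith)]
    exact inv_lt_one_of_one_lt₀ hp
  have hrho : (rho 1 0 : ℂ) = 1 / 2 := by norm_num [rho]
  have hintegrand : EqOn
      (fun s : ℝ ↦ (s : ℂ) ^ (((1 : ℂ) + 2) / 4 - I * l / 2 - 1) *
          ((1 - s : ℝ) : ℂ) ^ (((-1 : ℂ) + 2) / 4 - I * l / 2 - 1) *
          ((p - s : ℝ) : ℂ) ^ (-(((rho 1 0 : ℂ) - I * l) / 2)))
      (fun s ↦ (p : ℂ) ^ (-a) * (betaKernel b a s * (1 - s * (p : ℂ)⁻¹) ^ (-a))) (Ioo 0 1) := by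
    intro s hs
    dsimp only
    rw [ofReal_sub_cpow_eq_mul (p := p) (by linarith) (by linarith [hs.2]), betaKernel, hrho]
    simp only [a, b]
    push_cast
    ring_nf
  refine ⟨IntegrableOn.congr_fun
    ((integrableOn_betaKernel_mul_one_sub_mul_cpow a hb ha hx).const_mul _)
    hintegrand.symm measurableSet_Ioo, ?_⟩
  rw [setIntegral_congr_fun measurableSet_Ioo hintegrand, integral_const_mul,
    setIntegral_betaKernel_mul_one_sub_mul_cpow a hb ha hx, bfun_one_zero hl, hrho,
    show b + a = 1 - I * l by simp only [a, b]; ring, show -2 * (1 / 2 : ℂ) - 1 = -2 by norm_num]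
  ring

end
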